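/- Given a family of BCK-algebras pairwise intersecting only in {0}, their union U equipped with x·y = x·_λ y if x,y lie in the same algebra A_λ, and x·y = x otherwise, is a BCK-algebra (the BCK-union). -/
import Mathlib


/-- The BCK-union: given a family of BCK-algebras (given as subsets `S λ` of a
common carrier `U`, each containing `0`, pairwise intersecting in `{0}`, covering
`U`, each closed under its own operation `ops λ` which satisfies the BCK axioms),
the operation `f` on the union defined by `f x y = ops λ x y` if `x, y ∈ S λ`
and `f x y = x` otherwise, makes `U` a BCK-algebra. -/
theorem stmt_6 (U : Type*) [Zero U] (Λ : Type*) (S : Λ → Set U)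
    (ops : Λ → U → U → U)
    (hzero : ∀ l, (0 : U) ∈ S l)
    (hdisj : ∀ l m, l ≠ m → S l ∩ S m = {0})
    (hcover : ∀ x : U, ∃ l, x ∈ S l)
    (hclosed : ∀ l, ∀ x ∈ S l, ∀ y ∈ S l, ops l x y ∈ S l)
    (hbck1 : ∀ l, ∀ x ∈ S l, ∀ y ∈ S l, ∀ z ∈ S l,
      ops l (ops l (ops l x y) (ops l x z)) (ops l z y) = 0)
    (hbck2 : ∀ l, ∀ x ∈ S l, ∀ y ∈ S l, ops l (ops l x (ops l x y)) y = 0)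
    (hbck3 : ∀ l, ∀ x ∈ S l, ops l x x = 0)
    (hbck4 : ∀ l, ∀ x ∈ S l, ops l 0 x = 0)
    (hbck5 : ∀ l, ∀ x ∈ S l, ∀ y ∈ S l, ops l x y = 0 → ops l y x = 0 → x = y)
    (f : U → U → U)
    (hf_in : ∀ l, ∀ x ∈ S l, ∀ y ∈ S l, f x y = ops l x y)
    (hf_out : ∀ x y : U, (∀ l, ¬(x ∈ S l ∧ y ∈ S l)) → f x y = x) :
    (∀ x y z : U, f (f (f x y) (f x z)) (f z y) = 0) ∧
    (∀ x y : U, f (f x (f x y)) y = 0) ∧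
    (∀ x : U, f x x = 0) ∧
    (∀ x : U, f 0 x = 0) ∧
    (∀ x y : U, f x y = 0 → f y x = 0 → x = y) := by
  classical
  -- uniqueness of the algebra containing a nonzero element
  have huniq : ∀ {l m : Λ} {x : U}, x ∈ S l → x ∈ S m → x ≠ 0 → l = m := by
    intro l m x hl hm hne
    by_contra h
    have hmem : x ∈ S l ∩ S m := ⟨hl, hm⟩
    rw [hdisj l m h] at hmem
    exact hne hmem
  -- x ∗ 0 = x in each algebra
  have hx0 : ∀ l, ∀ x ∈ S l, ops l x 0 = x := by
    intro l x hx
    have h0 : (0 : U) ∈ S l := hzero l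
    have hm : ops l x 0 ∈ S l := hclosed l x hx 0 h0
    have h1 : ops l (ops l x 0) x = 0 := by
      have h := hbck2 l x hx x hx
      rwa [hbck3 l x hx] at h
    have h2 : ops l x (ops l x 0) = 0 := by
      have hm2 : ops l x (ops l x 0) ∈ S l := hclosed l x hx _ hm
      exact hbck5 l _ hm2 0 h0 (hbck2 l x hx 0 h0) (hbck4 l _ hm2)
    exact hbck5 l _ hm x hx h1 h2
  -- (x ∗ y) ∗ x = 0 in each algebra
  have hxyx : ∀ l, ∀ x ∈ S l, ∀ y ∈ S l, ops l (ops l x y) x = 0 := by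
    intro l x hx y hy
    have hm : ops l x y ∈ S l := hclosed l x hx y hy
    have hm2 : ops l (ops l x y) x ∈ S l := hclosed l _ hm x hx
    have h := hbck1 l x hx y hy 0 (hzero l)
    rw [hx0 l x hx, hbck4 l y hy] at h
    exact hbck5 l _ hm2 0 (hzero l) h (hbck4 l _ hm2)
  -- basic facts about f
  have hf0 : ∀ y : U, f 0 y = 0 := by
    intro y
    obtain ⟨l, hy⟩ := hcover y
    rw [hf_in l 0 (hzero l) y hy, hbck4 l y hy]
  have hfx0 : ∀ x : U, f x 0 = x := by
    intro x
    obtain ⟨l, hx⟩ := hcover x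
    rw [hf_in l x hx 0 (hzero l), hx0 l x hx]
  have hfxx : ∀ x : U, f x x = 0 := by
    intro x
    obtain ⟨l, hx⟩ := hcover x
    rw [hf_in l x hx x hx, hbck3 l x hx]
  refine ⟨?_, ?_, hfxx, hf0, ?_⟩
  · -- BCK1
    intro x y z
    by_cases hxy : ∃ l, x ∈ S l ∧ y ∈ S l
    · obtain ⟨l, hx, hy⟩ := hxy
      by_cases hx0' : x = 0
      · subst hx0'
        simp only [hf0]
      · by_cases hxz : ∃ m, x ∈ S m ∧ z ∈ S m
        · obtain ⟨m, hx', hz⟩ := hxz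
          have hlm : l = m := huniq hx hx' hx0'
          subst hlm
          have m1 : ops l x y ∈ S l := hclosed l x hx y hy
          have m2 : ops l x z ∈ S l := hclosed l x hx z hz
          have m3 : ops l (ops l x y) (ops l x z) ∈ S l := hclosed l _ m1 _ m2
          have m4 : ops l z y ∈ S l := hclosed l z hz y hy
          rw [hf_in l x hx y hy, hf_in l x hx z hz, hf_in l _ m1 _ m2,
            hf_in l z hz y hy, hf_in l _ m3 _ m4]
          exact hbck1 l x hx y hy z hz
        · have hfxz : f x z = x := hf_out x z (fun m hm => hxz ⟨m, hm⟩)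
          by_cases hy0 : y = 0
          · subst hy0
            rw [hfxz, hfx0 x, hfxx x, hf0]
          · have hzy : ¬∃ m, z ∈ S m ∧ y ∈ S m := by
              rintro ⟨m, hz, hy'⟩
              exact hxz ⟨l, hx, (huniq hy' hy hy0) ▸ hz⟩
            have hfzy : f z y = z := hf_out z y (fun m hm => hzy ⟨m, hm⟩)
            have m1 : ops l x y ∈ S l := hclosed l x hx y hy
            rw [hfxz, hfzy, hf_in l x hx y hy, hf_in l _ m1 x hx,
              hxyx l x hx y hy, hf0]
    · have hx0' : x ≠ 0 := by
        rintro rfl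
        obtain ⟨l, hy⟩ := hcover y
        exact hxy ⟨l, hzero l, hy⟩
      have hfxy : f x y = x := hf_out x y (fun m hm => hxy ⟨m, hm⟩)
      by_cases hxz : ∃ m, x ∈ S m ∧ z ∈ S m
      · obtain ⟨l, hx, hz⟩ := hxz
        by_cases hz0 : z = 0
        · subst hz0
          rw [hfxy, hfx0 x, hfxx x, hf0]
        · by_cases hzy : ∃ m, z ∈ S m ∧ y ∈ S m
          · obtain ⟨m, hz', hy'⟩ := hzy
            exact absurd ⟨l, hx, (huniq hz' hz hz0) ▸ hy'⟩ hxy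
          · have hfzy : f z y = z := hf_out z y (fun m hm => hzy ⟨m, hm⟩)
            have mxz : ops l x z ∈ S l := hclosed l x hx z hz
            have mw : ops l x (ops l x z) ∈ S l := hclosed l x hx _ mxz
            rw [hfxy, hfzy, hf_in l x hx z hz, hf_in l x hx _ mxz,
              hf_in l _ mw z hz]
            exact hbck2 l x hx z hz
      · have hfxz : f x z = x := hf_out x z (fun m hm => hxz ⟨m, hm⟩)
        rw [hfxy, hfxz, hfxx x, hf0]
  · -- BCK2
    intro x y
    by_cases hxy : ∃ l, x ∈ S l ∧ y ∈ S l
    · obtain ⟨l, hx, hy⟩ := hxy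
      have m1 : ops l x y ∈ S l := hclosed l x hx y hy
      have m2 : ops l x (ops l x y) ∈ S l := hclosed l x hx _ m1
      rw [hf_in l x hx y hy, hf_in l x hx _ m1, hf_in l _ m2 y hy]
      exact hbck2 l x hx y hy
    · have hfxy : f x y = x := hf_out x y (fun m hm => hxy ⟨m, hm⟩)
      rw [hfxy, hfxx x, hf0]
  · -- BCK5
    intro x y h1 h2
    by_cases hxy : ∃ l, x ∈ S l ∧ y ∈ S l
    · obtain ⟨l, hx, hy⟩ := hxy
      exact hbck5 l x hx y hy (by rw [← hf_in l x hx y hy]; exact h1)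
        (by rw [← hf_in l y hy x hx]; exact h2)
    · rw [hf_out x y (fun m hm => hxy ⟨m, hm⟩)] at h1
      subst h1
      obtain ⟨l, hy⟩ := hcover y
      exact absurd ⟨l, hzero l, hy⟩ hxy
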